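/- Define one-forms ω_1, ..., ω_n on R^n (coordinates c_1, ..., c_n) recursively by ω_k = dc_k - Σ_{j=1}^{k-1} (j+1) c_j ω_{k-j}, and truncated vector fields L_j = ∂_j + Σ_{k=1}^{n-j}(k+1) c_k ∂_{j+k}. Then ω_m(L_k) = δ_{mk} (Kronecker delta) for all 1 ≤ m, k ≤ n; that is, {ω_1,...,ω_n} is the dual basis to {L_1,...,L_n}. -/

import Mathlib

/-!
By strong induction on `m`: once `ω_i(L_k) = δ_{ik}` for `i < m`, the recursion for `ω_m`
collapses to `ω_m(L_k) = (L_k)_m - (m-k+1) c_{m-k} [k < m]`, and the component `(L_k)_m` is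
exactly `δ_{mk} + (m-k+1) c_{m-k} [k < m ≤ n]`.
-/

/-- The one-forms `ω_k` (evaluated at a point `c` on a tangent vector `v`, both
given by their coordinates indexed by `ℕ`), defined recursively by
`ω_1 = dc_1` and `ω_k = dc_k - Σ_{j=1}^{k-1} (j+1) c_j ω_{k-j}`
(the summation index is shifted: `j` ranges over `0, ..., k-2`). -/
noncomputable def omegaForm (c v : ℕ → ℝ) : ℕ → ℝ
  | 0 => v 0
  | (k + 1) => v (k + 1) -
      ∑ j ∈ Finset.range k, ((j : ℝ) + 2) * c (j + 1) * omegaForm c v (k - j)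
  termination_by k => k
  decreasing_by omega

/-- The coordinates (in the basis `∂_1, ..., ∂_n`) of the truncated Kirillov
vector field `L_j = ∂_j + Σ_{k=1}^{n-j} (k+1) c_k ∂_{j+k}` at the point `c`:
the component with index `i` is `1` if `i = j`, and `(i-j+1) c_{i-j}` if
`j < i ≤ n`. -/
noncomputable def kirillovVec (n : ℕ) (c : ℕ → ℝ) (j : ℕ) : ℕ → ℝ :=
  fun i => (if i = j then 1 else 0) +
    (if j < i ∧ i ≤ n then (((i - j : ℕ) : ℝ) + 1) * c (i - j) else 0)

open Finset

lemma omegaForm_succ (c v : ℕ → ℝ) (s : ℕ) :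
    omegaForm c v (s + 1) =
      v (s + 1) - ∑ j ∈ range s, ((j : ℝ) + 2) * c (j + 1) * omegaForm c v (s - j) := by
  rw [omegaForm]

lemma kirillovVec_of_lt {n k i : ℕ} (c : ℕ → ℝ) (hki : k < i) (hin : i ≤ n) :
    kirillovVec n c k i = ((i - k : ℕ) + 1) * c (i - k) := by
  simp [kirillovVec, hki, hin, hki.ne']

lemma kirillovVec_of_le {k i : ℕ} (n : ℕ) (c : ℕ → ℝ) (hik : i ≤ k) :
    kirillovVec n c k i = if i = k then 1 else 0 := by
  simp [kirillovVec, hik.not_gt]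

lemma sum_range_mul_ite_sub_eq {R : Type*} [NonAssocSemiring R] (a : ℕ → R) {k : ℕ}
    (hk : 1 ≤ k) (s : ℕ) :
    ∑ j ∈ range s, a j * (if s - j = k then 1 else 0) = if k ≤ s then a (s - k) else 0 := by
  have hterm : ∀ j ∈ range s, a j * (if s - j = k then 1 else 0) =
      if s - k = j ∧ k ≤ s then a j else 0 := fun j hj => by
    rw [mul_ite, mul_one, mul_zero]
    exact if_congr (by grind) rfl rfl
  rw [sum_congr rfl hterm]
  by_cases hks : k ≤ s
  · simp only [hks, and_true, sum_ite_eq, mem_range, if_true]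
    rw [if_pos (by omega)]
  · simp [hks]

theorem omega_dual_basis_general (n : ℕ) (c : ℕ → ℝ) (m k : ℕ)
    (hmn : m ≤ n) (hk : 1 ≤ k) :
    omegaForm c (kirillovVec n c k) m = if m = k then (1 : ℝ) else 0 := by
  induction m using Nat.strong_induction_on with
  | _ m ih =>
  cases m with
  | zero => rw [omegaForm, kirillovVec_of_le n c (Nat.zero_le k)]
  | succ s =>
    have hsum : ∑ j ∈ range s, ((j : ℝ) + 2) * c (j + 1) * omegaForm c (kirillovVec n c k) (s - j)
        = if k ≤ s then (((s - k : ℕ) : ℝ) + 2) * c (s - k + 1) else 0 := by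
      rw [← sum_range_mul_ite_sub_eq (fun j => ((j : ℝ) + 2) * c (j + 1)) hk]
      refine sum_congr rfl fun j _ => ?_
      rw [ih (s - j) (by omega) (by omega)]
    rw [omegaForm_succ, hsum]
    rcases lt_or_ge k (s + 1) with hks | hks
    · rw [kirillovVec_of_lt c hks hmn, if_pos (by omega), if_neg (by omega),
        show s + 1 - k = s - k + 1 by omega]
      push_cast
      ring
    · rw [kirillovVec_of_le n c hks, if_neg (show ¬k ≤ s by omega), sub_zero]

/-- `ω_m(L_k) = δ_{mk}` for all `1 ≤ m, k ≤ n`: the forms `{ω_1, ..., ω_n}` form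
the dual basis to the truncated Kirillov fields `{L_1, ..., L_n}`. -/
theorem omega_dual_basis (n : ℕ) (c : ℕ → ℝ) (m k : ℕ)
    (hm : 1 ≤ m) (hmn : m ≤ n) (hk : 1 ≤ k) (hkn : k ≤ n) :
    omegaForm c (kirillovVec n c k) m = if m = k then (1 : ℝ) else 0 :=
  omega_dual_basis_general n c m k hmn hk
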